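/- Let X be a finite pure simplicial complex of dimension at least 2, G a group, and φ ∈ C¹(X;G). Let S be a finite nonempty set with a probability distribution μ, and suppose that for each s ∈ S we are given ψ_s ∈ C⁰(X;G) and, for each edge e ∈ X(1), a subcomplex Y_s(e) of X, such that whenever (ψ_s.φ)(u,v) ≠ 1 for an edge e={u,v}, there exists a 2-simplex τ of Y_s(e) with d₁φ(τ) ≠ 1. For a 2-simplex τ ∈ X(2) define δ_s(τ) = Σ_{e∈X(1) : τ∈Y_s(e)} c_X(e)/c_X(τ) and δ(τ) = Σ_{s∈S} μ(s)·δ_s(τ). Then ‖φ‖_csy ≤ (max_{τ∈X(2)} δ(τ)) · ‖d₁φ‖. -/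

import Mathlib

open Finset

variable {V : Type*} [DecidableEq V]

/-- A finite abstract simplicial complex on vertex type `V`. -/
structure SComplex (V : Type*) [DecidableEq V] where
  faces : Finset (Finset V)
  nonempty_of_mem : ∀ σ ∈ faces, σ.Nonempty
  down_closed : ∀ σ ∈ faces, ∀ τ ⊆ σ, τ.Nonempty → τ ∈ faces

namespace SComplex

/-- The set `X(k)` of `k`-dimensional simplices (cardinality `k+1`). -/
def simps (X : SComplex V) (k : ℕ) : Finset (Finset V) :=
  X.faces.filter fun σ => σ.card = k + 1

/-- The number of vertices of a top-dimensional face. -/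
def rank (X : SComplex V) : ℕ := X.faces.sup Finset.card

/-- The weight `c_X(σ)`. -/
noncomputable def weight (X : SComplex V) (σ : Finset V) : ℝ :=
  (((X.simps (X.rank - 1)).filter fun τ => σ ⊆ τ).card : ℝ) /
    ((X.rank.choose σ.card) * ((X.simps (X.rank - 1)).card))

/-- `X` is pure of dimension `n-1` : every face is contained in a face with `n` vertices. -/
def IsPureOfRank (X : SComplex V) (n : ℕ) : Prop :=
  X.faces.Nonempty ∧ ∀ σ ∈ X.faces, ∃ τ ∈ X.faces, σ ⊆ τ ∧ τ.card = n

/-- The link `lk(X,σ)`. -/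
def lk (X : SComplex V) (σ : Finset V) : SComplex V where
  faces := X.faces.filter fun η => η ∪ σ ∈ X.faces ∧ Disjoint η σ
  nonempty_of_mem := fun η hη => X.nonempty_of_mem η (mem_filter.mp hη).1
  down_closed := by
    intro η hη τ hτη hτ
    rw [mem_filter] at hη ⊢
    refine ⟨X.down_closed η hη.1 τ hτη hτ,
      X.down_closed (η ∪ σ) hη.2.1 (τ ∪ σ) (union_subset_union_left hτη) ?_,
      hη.2.2.mono_left hτη⟩
    exact hτ.mono subset_union_left

/-- The star `st(X,σ)`. -/
def star (X : SComplex V) (σ : Finset V) : Finset (Finset V) :=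
  X.faces.filter fun τ => τ ∪ σ ∈ X.faces

/-- The vertices of `X`. -/
def verts (X : SComplex V) [Fintype V] : Finset V :=
  Finset.univ.filter fun v => ({v} : Finset V) ∈ X.faces

end SComplex
section Cochains

variable {G : Type*} [Group G]

/-- `φ ∈ C¹(X;G)`: an antisymmetric `G`-valued function on ordered pairs. -/
def IsCochain (G : Type*) [Group G] (φ : V → V → G) : Prop :=
  ∀ u v : V, φ u v = (φ v u)⁻¹

/-- The coboundary `d₁φ(u,v,w) = φ(u,v)φ(v,w)φ(w,u)`. -/
def d1 (φ : V → V → G) (u v w : V) : G := φ u v * φ v w * φ w u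

/-- `φ ∈ Z¹(X;G)`: a cochain all of whose triangle equations hold. -/
def IsCocycle (X : SComplex V) (φ : V → V → G) : Prop :=
  IsCochain G φ ∧ ∀ u v w : V, ({u, v, w} : Finset V) ∈ X.simps 2 → d1 φ u v w = 1

open Classical in
/-- The norm `‖φ‖`: total weight of the support of `φ`. -/
noncomputable def norm1 (X : SComplex V) (φ : V → V → G) : ℝ :=
  ∑ e ∈ (X.simps 1).filter (fun e => ∃ u v : V, e = {u, v} ∧ φ u v ≠ 1), X.weight e

open Classical in
/-- The norm `‖d₁φ‖`: total weight of the 2-simplices whose equation is violated. -/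
noncomputable def normD1 (X : SComplex V) (φ : V → V → G) : ℝ :=
  ∑ τ ∈ (X.simps 2).filter (fun τ => ∃ u v w : V, τ = {u, v, w} ∧ d1 φ u v w ≠ 1), X.weight τ

/-- `dist(φ,ψ) = ‖φψ⁻¹‖`. -/
noncomputable def dist1 (X : SComplex V) (φ ψ : V → V → G) : ℝ :=
  norm1 X (fun u v => φ u v * (ψ u v)⁻¹)

/-- The cosystolic norm `‖φ‖_csy`: the distance from `φ` to `Z¹(X;G)`. -/
noncomputable def csyNorm (X : SComplex V) (φ : V → V → G) : ℝ :=
  sInf {d : ℝ | ∃ ψ : V → V → G, IsCocycle X ψ ∧ d = dist1 X φ ψ}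

/-- The cosystolic expansion `h₁(X;G)`. -/
noncomputable def h1 (X : SComplex V) (G : Type*) [Group G] : ℝ :=
  sInf {r : ℝ | ∃ φ : V → V → G, IsCochain G φ ∧ ¬ IsCocycle X φ ∧
    r = normD1 X φ / csyNorm X φ}

end Cochains

section Fix

variable (G : Type*) [Group G] (S : Type*) [Fintype S] [MulAction G S]

open Classical in
/-- `fix(g) = |{s ∈ S : g•s = s}|`. -/
noncomputable def fixCard (g : G) : ℕ :=
  (Finset.univ.filter fun s : S => g • s = s).card

/-- `Fix_G(S) = max_{g ≠ 1} fix(g)`. -/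
noncomputable def FixG : ℕ :=
  sSup {k : ℕ | ∃ g : G, g ≠ 1 ∧ fixCard G S g = k}

end Fix
section Ycomplex

variable {G : Type*} [Group G] {S : Type*} [Fintype S] [DecidableEq S] [MulAction G S]
variable [Fintype V]

open Classical in
/-- The complex `Y_φ` associated to a cochain `φ`, together with the projection
`Prod.fst : Y_φ → X`. -/
noncomputable def Ycomplex (X : SComplex V) (φ : V → V → G) (S : Type*)
    [Fintype S] [DecidableEq S] [MulAction G S] : SComplex (V × S) where
  faces := Finset.univ.filter fun σ : Finset (V × S) =>
    σ.image Prod.fst ∈ X.faces ∧ (σ.image Prod.fst).card = σ.card ∧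
    ∀ p ∈ σ, ∀ q ∈ σ, p.1 ≠ q.1 → p.2 = φ p.1 q.1 • q.2
  nonempty_of_mem := by
    intro σ hσ
    rw [Finset.mem_filter] at hσ
    exact Finset.image_nonempty.mp (X.nonempty_of_mem _ hσ.2.1)
  down_closed := by
    intro σ hσ τ hτσ hτ
    rw [Finset.mem_filter] at hσ ⊢
    obtain ⟨-, h1, h2, h3⟩ := hσ
    refine ⟨Finset.mem_univ _,
      X.down_closed _ h1 _ (Finset.image_subset_image hτσ) (Finset.image_nonempty.mpr hτ),
      ?_, fun p hp q hq => h3 p (hτσ hp) q (hτσ hq)⟩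
    exact Finset.card_image_iff.mpr ((Finset.card_image_iff.mp h2).mono hτσ)

end Ycomplex

section Deficiency

variable {W : Type*} [DecidableEq W] [Fintype W] [Fintype V]

open Classical in
/-- `D_f(ut)`: the edges in the link of `f(ut)` that are not covered by the image of the
link of `ut`. -/
noncomputable def Dset (Y : SComplex W) (X : SComplex V) (f : W → V) (ut : W) :
    Finset (Finset V) :=
  ((X.lk {f ut}).simps 1).filter fun e => ¬ ∃ η ∈ (Y.lk {ut}).faces, η.image f = e

/-- The local deficiency `μ_f(ut)`. -/
noncomputable def locDef (Y : SComplex W) (X : SComplex V) (f : W → V) (ut : W) : ℝ :=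
  ∑ e ∈ Dset Y X f ut, (X.lk {f ut}).weight e

open Classical in
/-- The deficiency `m_f(Y)` of a map `f : Y → X`. -/
noncomputable def deficiency (Y : SComplex W) (X : SComplex V) (f : W → V) : ℝ :=
  ∑ u ∈ X.verts, (X.weight {u} / ((Y.verts.filter fun w => f w = u).card : ℝ)) *
    ∑ ut ∈ Y.verts.filter (fun w => f w = u), locDef Y X f ut

end Deficiency
section MapOver

variable [Fintype V]

/-- An element of `M(X;G,S)`: a surjective simplicial `|S|`-to-`1` map onto `X` whose
vertex fibers are identified with `S` and whose edge fibers are matchings given by the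
action of elements of `G`. -/
structure MapOver (X : SComplex V) (G : Type*) (S : Type*) [Group G] [Fintype S]
    [DecidableEq S] [MulAction G S] [Fintype V] where
  Y : SComplex (V × S)
  simplicial : ∀ τ ∈ Y.faces, τ.image Prod.fst ∈ X.faces
  injOnFaces : ∀ τ ∈ Y.faces, (τ.image Prod.fst).card = τ.card
  surj : ∀ σ ∈ X.faces, ∃ τ ∈ Y.faces, τ.image Prod.fst = σ
  fiber : ∀ p : V × S, ({p} : Finset (V × S)) ∈ Y.faces ↔ ({p.1} : Finset V) ∈ X.faces
  edges : ∀ u v : V, ({u, v} : Finset V) ∈ X.simps 1 → ∃ g : G,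
    ∀ s t : S, (({(u, s), (v, t)} : Finset (V × S)) ∈ Y.faces ↔ s = g • t)

variable {G : Type*} [Group G] {S : Type*} [Fintype S] [DecidableEq S] [MulAction G S]

open Classical in
/-- The set of edges of `Y` lying over a given edge of the base. -/
noncomputable def edgeFiber (Y : SComplex (V × S)) (e : Finset V) :
    Finset (Finset (V × S)) :=
  (Y.simps 1).filter fun e' => e'.image Prod.fst = e

open Classical in
/-- The distance between two elements of `M(X;G,S)`: the weight of the set of edges of
`X` over which the two edge fibers differ. -/
noncomputable def mdist (X : SComplex V) (M₁ M₂ : MapOver X G S) : ℝ :=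
  ∑ e ∈ (X.simps 1).filter (fun e => edgeFiber M₁.Y e ≠ edgeFiber M₂.Y e), X.weight e

/-- The distance from an element of `M(X;G,S)` to the set `M₀(X;G,S)` of genuine covers. -/
noncomputable def distToCovers (X : SComplex V) (M : MapOver X G S) : ℝ :=
  sInf {d : ℝ | ∃ M' : MapOver X G S, deficiency M'.Y X Prod.fst = 0 ∧ d = mdist X M M'}

/-- The `(G,S)`-cover-stability `c(X;G,S)`. -/
noncomputable def coverStability (X : SComplex V) (G : Type*) (S : Type*) [Group G]
    [Fintype S] [DecidableEq S] [MulAction G S] : ℝ :=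
  sInf {r : ℝ | ∃ M : MapOver X G S, deficiency M.Y X Prod.fst ≠ 0 ∧
    r = deficiency M.Y X Prod.fst / distToCovers X M}

end MapOver
section Paths

/-- A (possibly closed) edge path in a complex: consecutive vertices span edges. -/
def IsEdgePath (K : SComplex V) (p : List V) : Prop :=
  (∀ v ∈ p, ({v} : Finset V) ∈ K.faces) ∧
    p.Chain' fun u v => ({u, v} : Finset V) ∈ K.faces

/-- Combinatorial homotopy of edge paths, generated by erasing repetitions and by
collapsing across simplices. -/
inductive Homotopic (K : SComplex V) : List V → List V → Prop
  | refl (p : List V) : Homotopic K p p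
  | symm {p q : List V} : Homotopic K p q → Homotopic K q p
  | trans {p q r : List V} : Homotopic K p q → Homotopic K q r → Homotopic K p r
  | collapse (p q : List V) (a b c : V) (h : ({a, b, c} : Finset V) ∈ K.faces) :
      Homotopic K (p ++ a :: b :: c :: q) (p ++ a :: c :: q)
  | dedup (p q : List V) (a : V) : Homotopic K (p ++ a :: a :: q) (p ++ a :: q)

/-- `K` is connected: any two vertices are joined by an edge path. -/
def SComplexConnected (K : SComplex V) : Prop :=
  ∀ u v : V, ({u} : Finset V) ∈ K.faces → ({v} : Finset V) ∈ K.faces →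
    ∃ p : List V, IsEdgePath K p ∧ p.head? = some u ∧ p.getLast? = some v

/-- `K` is simply connected: connected, and every closed edge path is null-homotopic. -/
def SimplyConnected (K : SComplex V) : Prop :=
  SComplexConnected K ∧
    ∀ (p : List V) (a : V), IsEdgePath K p → p.head? = some a → p.getLast? = some a →
      Homotopic K p [a]

end Paths

section OrderComplex

open Classical in
/-- The order complex of `L ∖ {⊥, ⊤}`: simplices are the nonempty chains avoiding
`⊥` and `⊤`. -/
noncomputable def orderComplex (L : Type*) [Lattice L] [BoundedOrder L] [Fintype L]
    [DecidableEq L] : SComplex L where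
  faces := Finset.univ.filter fun σ : Finset L =>
    σ.Nonempty ∧ (∀ x ∈ σ, x ≠ ⊥ ∧ x ≠ ⊤) ∧ ∀ x ∈ σ, ∀ y ∈ σ, x ≤ y ∨ y ≤ x
  nonempty_of_mem := fun σ hσ => (Finset.mem_filter.mp hσ).2.1
  down_closed := by
    intro σ hσ τ hτσ hτ
    rw [Finset.mem_filter] at hσ ⊢
    exact ⟨Finset.mem_univ _, hτ, fun x hx => hσ.2.2.1 x (hτσ hx),
      fun x hx y hy => hσ.2.2.2 x (hτσ hx) y (hτσ hy)⟩

end OrderComplex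
section Building

variable (F : Type*) [Field F] [Fintype F]

noncomputable instance : Fintype (Submodule F (Fin 4 → F)) := by
  have : Finite (Submodule F (Fin 4 → F)) :=
    Finite.of_injective (fun N => (N : Set (Fin 4 → F))) SetLike.coe_injective
  exact Fintype.ofFinite _

noncomputable instance : DecidableEq (Submodule F (Fin 4 → F)) := Classical.decEq _

/-- The spherical building `A₃(F_q)`: the order complex of the poset of nontrivial proper
linear subspaces of `F_q⁴`. -/
noncomputable def A3 : SComplex (Submodule F (Fin 4 → F)) :=
  orderComplex (Submodule F (Fin 4 → F))

end Building
section FixEdge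

variable {G : Type*} [Group G]

open Classical in
/-- The value `fix(d₁φ(u,v₁,v₂))` for an unordered edge `e = {v₁,v₂}` of the link of `u`
(well defined for cochains, since `fix` is invariant under inversion and conjugation). -/
noncomputable def fixEdge (S : Type*) [Fintype S] [MulAction G S] (φ : V → V → G)
    (u : V) (e : Finset V) : ℕ :=
  sSup {k : ℕ | ∃ v₁ ∈ e, ∃ v₂ ∈ e, v₁ ≠ v₂ ∧ k = fixCard G S (d1 φ u v₁ v₂)}

end FixEdge

/-!
Each `ψ_s` yields the cocycle `u, v ↦ ψ_s(u)⁻¹ ψ_s(v)`, whose distance to `φ` is `‖ψ_s.φ‖`,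
so `‖φ‖_csy ≤ ‖ψ_s.φ‖`. Charging every edge in the support of `ψ_s.φ` to a violated triangle
of `Y_s(e)` bounds `‖ψ_s.φ‖` by `Σ_τ δ_s(τ) c_X(τ)` over violated triangles `τ`; averaging
over `s` and bounding `δ(τ)` by its maximum gives the claim. Purity makes every weight
`c_X(τ)` positive, so the division in `δ_s(τ)` can be undone.
-/

theorem Finset.sum_le_sum_sum_filter_of_forall_exists {α β M : Type*} [AddCommMonoid M]
    [PartialOrder M] [IsOrderedAddMonoid M] {s : Finset α} {t : Finset β} {r : α → β → Prop}
    [∀ a b, Decidable (r a b)] {f : α → M} (hf : ∀ a ∈ s, 0 ≤ f a)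
    (h : ∀ a ∈ s, ∃ b ∈ t, r a b) :
    ∑ a ∈ s, f a ≤ ∑ b ∈ t, ∑ a ∈ s with r a b, f a := by
  calc ∑ a ∈ s, f a ≤ ∑ a ∈ s, ∑ b ∈ t with r a b, f a := by
        refine sum_le_sum fun a ha => ?_
        obtain ⟨b, hb, hab⟩ := h a ha
        exact single_le_sum (f := fun _ => f a) (fun _ _ => hf a ha) (mem_filter.mpr ⟨hb, hab⟩)
    _ = ∑ b ∈ t, ∑ a ∈ s with r a b, f a := by
        simp only [sum_filter]
        exact sum_comm

theorem le_csSup_of_mem_finset {ι : Type*} {s : Finset ι} (f : ι → ℝ) {i : ι} (hi : i ∈ s) :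
    f i ≤ sSup {r : ℝ | ∃ j ∈ s, r = f j} :=
  have hfin : {r : ℝ | ∃ j ∈ s, r = f j}.Finite :=
    (s.finite_toSet.image f).subset fun _ ⟨j, hj, hr⟩ => ⟨j, hj, hr.symm⟩
  le_csSup hfin.bddAbove ⟨i, hi, rfl⟩

namespace SComplex

variable (X : SComplex V)

theorem card_le_rank {σ : Finset V} (hσ : σ ∈ X.faces) : σ.card ≤ X.rank :=
  le_sup hσ

theorem weight_nonneg (σ : Finset V) : 0 ≤ X.weight σ := by
  unfold weight
  positivity

variable {X}

theorem IsPureOfRank.rank_eq {n : ℕ} (h : X.IsPureOfRank n) : X.rank = n := by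
  obtain ⟨⟨σ, hσ⟩, hpure⟩ := h
  refine le_antisymm (Finset.sup_le fun ρ hρ => ?_) ?_
  · obtain ⟨τ, -, hρτ, rfl⟩ := hpure ρ hρ
    exact card_le_card hρτ
  · obtain ⟨τ, hτ, -, rfl⟩ := hpure σ hσ
    exact X.card_le_rank hτ

theorem IsPureOfRank.exists_top_simplex_superset {n : ℕ} (h : X.IsPureOfRank n)
    {σ : Finset V} (hσ : σ ∈ X.faces) : ∃ τ ∈ X.simps (X.rank - 1), σ ⊆ τ := by
  obtain ⟨τ, hτ, hστ, hcard⟩ := h.2 σ hσ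
  have := (X.nonempty_of_mem τ hτ).card_pos
  exact ⟨τ, mem_filter.mpr ⟨hτ, by rw [h.rank_eq]; omega⟩, hστ⟩

theorem IsPureOfRank.weight_pos {n : ℕ} (h : X.IsPureOfRank n) {σ : Finset V}
    (hσ : σ ∈ X.faces) : 0 < X.weight σ := by
  obtain ⟨τ, hτ, hστ⟩ := h.exists_top_simplex_superset hσ
  have := Nat.choose_pos (X.card_le_rank hσ)
  have := card_pos.mpr ⟨τ, mem_filter.mpr ⟨hτ, hστ⟩⟩
  have := card_pos.mpr ⟨τ, hτ⟩
  unfold weight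
  positivity

end SComplex

section Cochains

variable {G : Type*} [Group G]

/-- The action `ψ.φ` of `C⁰(X;G)` on `C¹(X;G)`. -/
def gaugeAct {α : Type*} (ψ : α → G) (φ : α → α → G) : α → α → G :=
  fun u v => ψ u * φ u v * (ψ v)⁻¹

def d0 {α : Type*} (ψ : α → G) : α → α → G :=
  fun u v => (ψ u)⁻¹ * ψ v

theorem isCocycle_d0 (X : SComplex V) (ψ : V → G) : IsCocycle X (d0 ψ) :=
  ⟨fun u v => by simp [d0], fun u v w _ => by simp [d1, d0, mul_assoc]⟩

theorem mul_inv_d0_eq_one_iff {α : Type*} (φ : α → α → G) (ψ : α → G) (u v : α) :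
    φ u v * (d0 ψ u v)⁻¹ = 1 ↔ gaugeAct ψ φ u v = 1 := by
  simp only [d0, gaugeAct, mul_inv_rev, inv_inv, ← mul_assoc]
  rw [mul_eq_one_comm, ← mul_assoc]

theorem norm1_congr (X : SComplex V) {φ φ' : V → V → G}
    (h : ∀ u v, φ u v = 1 ↔ φ' u v = 1) : norm1 X φ = norm1 X φ' := by
  unfold norm1
  congr 1
  ext e
  simp only [mem_filter, ne_eq, h]

theorem csyNorm_le_dist1 (X : SComplex V) (φ : V → V → G) {χ : V → V → G}
    (hχ : IsCocycle X χ) : csyNorm X φ ≤ dist1 X φ χ :=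
  csInf_le ⟨0, by rintro _ ⟨_, -, rfl⟩; exact sum_nonneg fun e _ => X.weight_nonneg e⟩
    ⟨χ, hχ, rfl⟩

theorem csyNorm_le_norm1_gaugeAct (X : SComplex V) (φ : V → V → G) (ψ : V → G) :
    csyNorm X φ ≤ norm1 X (gaugeAct ψ φ) :=
  (csyNorm_le_dist1 X φ (isCocycle_d0 X ψ)).trans_eq
    (norm1_congr X (mul_inv_d0_eq_one_iff φ ψ))

open Classical in
noncomputable def edgeSupport (X : SComplex V) (φ : V → V → G) : Finset (Finset V) :=
  (X.simps 1).filter fun e => ∃ u v : V, e = {u, v} ∧ φ u v ≠ 1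

open Classical in
noncomputable def violatedTriangles (X : SComplex V) (φ : V → V → G) : Finset (Finset V) :=
  (X.simps 2).filter fun τ => ∃ u v w : V, τ = {u, v, w} ∧ d1 φ u v w ≠ 1

theorem violatedTriangles_subset (X : SComplex V) (φ : V → V → G) :
    violatedTriangles X φ ⊆ X.simps 2 := by
  classical
  exact filter_subset _ _

theorem normD1_eq_sum_violatedTriangles (X : SComplex V) (φ : V → V → G) :
    normD1 X φ = ∑ τ ∈ violatedTriangles X φ, X.weight τ :=
  rfl

theorem norm1_gaugeAct_le (X : SComplex V) (φ : V → V → G) (ψ : V → G)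
    (Y : Finset V → SComplex V) (hsub : ∀ e ∈ X.simps 1, (Y e).faces ⊆ X.faces)
    (hcover : ∀ u v : V, ({u, v} : Finset V) ∈ X.simps 1 → gaugeAct ψ φ u v ≠ 1 →
      ∃ a b c : V, ({a, b, c} : Finset V) ∈ (Y {u, v}).simps 2 ∧ d1 φ a b c ≠ 1) :
    norm1 X (gaugeAct ψ φ) ≤ ∑ τ ∈ violatedTriangles X φ,
      ∑ e ∈ (X.simps 1).filter (fun e => τ ∈ (Y e).faces), X.weight e := by
  classical
  have hcharge : ∀ e ∈ edgeSupport X (gaugeAct ψ φ),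
      ∃ τ ∈ violatedTriangles X φ, τ ∈ (Y e).faces := by
    rintro e he
    obtain ⟨he1, u, v, rfl, huv⟩ := mem_filter.mp he
    obtain ⟨a, b, c, habc, hd⟩ := hcover u v he1 huv
    obtain ⟨habcY, hcard⟩ := mem_filter.mp habc
    exact ⟨_, mem_filter.mpr ⟨mem_filter.mpr ⟨hsub _ he1 habcY, hcard⟩, a, b, c, rfl, hd⟩, habcY⟩
  calc norm1 X (gaugeAct ψ φ) = ∑ e ∈ edgeSupport X (gaugeAct ψ φ), X.weight e := rfl
    _ ≤ _ := sum_le_sum_sum_filter_of_forall_exists (fun e _ => X.weight_nonneg e) hcharge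
    _ ≤ _ := sum_le_sum fun τ _ => sum_le_sum_of_subset_of_nonneg
        (filter_subset_filter _ (filter_subset _ _)) fun e _ _ => X.weight_nonneg e

end Cochains

open Classical in
theorem csyNorm_le_max_delta_mul_normD1_general
    {V : Type*} [DecidableEq V] {G : Type*} [Group G]
    {S : Type*} [Fintype S]
    (X : SComplex V) (n : ℕ) (hpure : X.IsPureOfRank n)
    (φ : V → V → G)
    (μ : S → ℝ) (hμ0 : ∀ s, 0 ≤ μ s) (hμ1 : ∑ s : S, μ s = 1)
    (ψ : S → V → G) (Y : S → Finset V → SComplex V)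
    (hsub : ∀ s : S, ∀ e ∈ X.simps 1, (Y s e).faces ⊆ X.faces)
    (hcover : ∀ (s : S) (u v : V), ({u, v} : Finset V) ∈ X.simps 1 →
      ψ s u * φ u v * (ψ s v)⁻¹ ≠ 1 →
      ∃ a b c : V, ({a, b, c} : Finset V) ∈ (Y s {u, v}).simps 2 ∧ d1 φ a b c ≠ 1) :
    csyNorm X φ ≤
      sSup {r : ℝ | ∃ τ ∈ X.simps 2, r = ∑ s : S, μ s *
          ∑ e ∈ (X.simps 1).filter (fun e => τ ∈ (Y s e).faces),
            X.weight e / X.weight τ} *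
        normD1 X φ := by
  set δ : Finset V → ℝ := fun τ => ∑ s : S, μ s *
    ∑ e ∈ (X.simps 1).filter (fun e => τ ∈ (Y s e).faces), X.weight e / X.weight τ
  calc csyNorm X φ = ∑ s, μ s * csyNorm X φ := by rw [← sum_mul, hμ1, one_mul]
    _ ≤ ∑ s, μ s * ∑ τ ∈ violatedTriangles X φ,
          ∑ e ∈ (X.simps 1).filter (fun e => τ ∈ (Y s e).faces), X.weight e :=
        sum_le_sum fun s _ => mul_le_mul_of_nonneg_left
          ((csyNorm_le_norm1_gaugeAct X φ (ψ s)).trans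
            (norm1_gaugeAct_le X φ (ψ s) (Y s) (hsub s) (hcover s))) (hμ0 s)
    _ = ∑ τ ∈ violatedTriangles X φ, δ τ * X.weight τ := by
        simp only [mul_sum]
        rw [sum_comm]
        refine sum_congr rfl fun τ hτ => ?_
        have hw := (hpure.weight_pos (mem_filter.mp (violatedTriangles_subset X φ hτ)).1).ne'
        simp only [δ, sum_mul, mul_assoc, ← sum_div, div_mul_cancel₀ _ hw, mul_sum]
    _ ≤ ∑ τ ∈ violatedTriangles X φ, sSup {r | ∃ τ ∈ X.simps 2, r = δ τ} * X.weight τ :=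
        sum_le_sum fun τ hτ => mul_le_mul_of_nonneg_right
          (le_csSup_of_mem_finset δ (violatedTriangles_subset X φ hτ)) (X.weight_nonneg τ)
    _ = _ := by rw [← mul_sum, normD1_eq_sum_violatedTriangles]

open Classical in
/-- the chain of inequalities (4.2): if acting on `φ` by each `ψ_s` pushes
the support of the result into subcomplexes `Y_s(e)` containing violated triangles, then
`‖φ‖_csy ≤ (max_τ δ(τ))·‖d₁φ‖`, where `δ(τ) = E_s[Σ_{e : τ ∈ Y_s(e)} c_X(e)/c_X(τ)]`. -/
theorem csyNorm_le_max_delta_mul_normD1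
    {V : Type*} [DecidableEq V] {G : Type*} [Group G]
    {S : Type*} [Fintype S] [Nonempty S]
    (X : SComplex V) (n : ℕ) (hn : 3 ≤ n) (hpure : X.IsPureOfRank n)
    (φ : V → V → G) (hφ : IsCochain G φ)
    (μ : S → ℝ) (hμ0 : ∀ s, 0 ≤ μ s) (hμ1 : ∑ s : S, μ s = 1)
    (ψ : S → V → G) (Y : S → Finset V → SComplex V)
    (hsub : ∀ s : S, ∀ e ∈ X.simps 1, (Y s e).faces ⊆ X.faces)
    (hcover : ∀ (s : S) (u v : V), ({u, v} : Finset V) ∈ X.simps 1 →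
      ψ s u * φ u v * (ψ s v)⁻¹ ≠ 1 →
      ∃ a b c : V, ({a, b, c} : Finset V) ∈ (Y s {u, v}).simps 2 ∧ d1 φ a b c ≠ 1) :
    csyNorm X φ ≤
      sSup {r : ℝ | ∃ τ ∈ X.simps 2, r = ∑ s : S, μ s *
          ∑ e ∈ (X.simps 1).filter (fun e => τ ∈ (Y s e).faces),
            X.weight e / X.weight τ} *
        normD1 X φ :=
  csyNorm_le_max_delta_mul_normD1_general X n hpure φ μ hμ0 hμ1 ψ Y hsub hcover
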